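/- Let M be a monoid with at least two elements and R a ring. If R is M-central Armendariz, then R is Abelian, i.e., every idempotent element of R is central. -/

import Mathlib

/-!
For an idempotent `e` and `r : R`, the element `a = e r (1 - e)` satisfies `e a = a`, `a e = 0`
and `a² = 0`, so `(e + a g)((1 - e) - a g) = 0` in `R[M]` for any `g ≠ 1`. Central Armendariz
makes `a (1 - e) = a` central, whence `a = e a = a e = 0`. An idempotent `e` with
`e R (1 - e) = 0 = (1 - e) R e` is central.
-/

theorem mem_center_of_mul_mul_one_sub_eq_zero {R : Type*} [Ring R] {e : R}
    (h : ∀ r, e * r * (1 - e) = 0) (h' : ∀ r, (1 - e) * r * e = 0) : e ∈ Set.center R := by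
  refine Semigroup.mem_center_iff.mpr fun r ↦ ?_
  have hl : e * r = e * r * e := by simpa [mul_sub, sub_eq_zero] using h r
  have hr : r * e = e * r * e := by simpa [sub_mul, sub_eq_zero] using h' r
  rw [hl, hr]

def MonoidAlgebra.IsCentralArmendariz (R M : Type*) [Ring R] [Monoid M] : Prop :=
  ∀ α β : MonoidAlgebra R M, α * β = 0 →
    ∀ g ∈ α.coeff.support, ∀ h ∈ β.coeff.support, α.coeff g * β.coeff h ∈ Set.center R

namespace MonoidAlgebra.IsCentralArmendariz

variable {R M : Type*} [Ring R] [Monoid M] [Nontrivial M]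

theorem eq_zero_of_idempotent_mul_eq_self_of_mul_eq_zero (hR : IsCentralArmendariz R M)
    {e a : R} (he : IsIdempotentElem e) (hea : e * a = a) (hae : a * e = 0) : a = 0 := by
  by_contra ha
  obtain ⟨g, hg⟩ := exists_ne (1 : M)
  have haa : a * a = 0 := by
    calc a * a = a * e * a := by rw [mul_assoc, hea]
      _ = 0 := by rw [hae, zero_mul]
  have ha1e : a * (1 - e) = a := by rw [mul_sub, mul_one, hae, sub_zero]
  set α : MonoidAlgebra R M := single 1 e + single g a
  set β : MonoidAlgebra R M := single 1 (1 - e) - single g a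
  have hαβ : α * β = 0 := by
    simp only [α, β, add_mul, mul_sub, single_mul_single, one_mul, mul_one,
      he.mul_one_sub_self, hea, ha1e, haa, single_zero]
    abel
  have hαg : α.coeff g = a := by simp [α, coeff_add, coeff_single, hg.symm]
  have hβ1 : β.coeff 1 = 1 - e := by simp [β, coeff_sub, coeff_single, hg]
  have h1e : 1 - e ≠ 0 := fun h ↦ ha (by rw [← ha1e, h, mul_zero])
  have hcentral := hR α β hαβ g (by simpa [hαg]) 1 (by simpa [hβ1] using h1e)
  rw [hαg, hβ1, ha1e] at hcentral
  exact ha (by rw [← hea, Semigroup.mem_center_iff.mp hcentral e, hae])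

theorem mul_mul_one_sub_eq_zero (hR : IsCentralArmendariz R M) {e : R}
    (he : IsIdempotentElem e) (r : R) : e * r * (1 - e) = 0 :=
  hR.eq_zero_of_idempotent_mul_eq_self_of_mul_eq_zero he
    (by rw [← mul_assoc, ← mul_assoc, he.eq]) (by rw [mul_assoc, he.one_sub_mul_self, mul_zero])

end MonoidAlgebra.IsCentralArmendariz

/-- If `|M| ≥ 2` and `R` is `M`-central Armendariz, then `R` is Abelian. -/
theorem stmt_2 (M R : Type*) [Monoid M] [Nontrivial M] [Ring R]
    (hCA : ∀ α β : MonoidAlgebra R M, α * β = 0 →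
      ∀ g ∈ α.coeff.support, ∀ h ∈ β.coeff.support, α.coeff g * β.coeff h ∈ Set.center R) :
    ∀ f : R, IsIdempotentElem f → f ∈ Set.center R := by
  have hR : MonoidAlgebra.IsCentralArmendariz R M := hCA
  intro f hf
  refine mem_center_of_mul_mul_one_sub_eq_zero (hR.mul_mul_one_sub_eq_zero hf) fun r ↦ ?_
  simpa using hR.mul_mul_one_sub_eq_zero hf.one_sub r
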